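/- arXiv:1303.3347 — 6 statements merged into one kernel-verified Lean document; each statement's English description precedes it below -/
import Mathlib

section
/- Let (G,sigma) be a finite signed graph. If every cut delta(X) (for X a subset of V) contains at least as many positive edges as negative edges, then l(G,sigma) = |E^-(sigma)|. If some cut delta(X) contains strictly more negative edges than positive edges, then l(G,sigma) < |E^-(sigma)|. -/
open SimpleGraph Finset


/-- A signed graph is balanced if every cycle has sign `+1`. -/
def IsBalanced {V : Type*} (G : SimpleGraph V) (σ : Sym2 V → ℤˣ) : Prop :=
  ∀ (v : V) (w : G.Walk v v), w.IsCycle → (w.edges.map σ).prod = 1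

/-- The set of negative edges of a signed graph. -/
def negEdges {V : Type*} (G : SimpleGraph V) (σ : Sym2 V → ℤˣ) : Set (Sym2 V) :=
  {e | e ∈ G.edgeSet ∧ σ e = -1}

/-- The frustration index: the least number of edges whose deletion leaves a balanced
signed graph. -/
noncomputable def frustIndex {V : Type*} (G : SimpleGraph V) (σ : Sym2 V → ℤˣ) : ℕ :=
  sInf {n | ∃ S : Finset (Sym2 V), ↑S ⊆ G.edgeSet ∧ S.card = n ∧
    IsBalanced (G.deleteEdges ↑S) σ}

/-- The switched signature `σ^ζ`, with `σ^ζ(uv) = ζ(u) * σ(uv) * ζ(v)`. -/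
def switch {V : Type*} (σ : Sym2 V → ℤˣ) (ζ : V → ℤˣ) : Sym2 V → ℤˣ := fun e =>
  Sym2.lift ⟨fun u v => ζ u * ζ v, fun u v => mul_comm (ζ u) (ζ v)⟩ e * σ e

/-- The cut determined by a vertex set `X`: all edges of `G` with exactly one endpoint
in `X`. -/
def cutEdges {V : Type*} (G : SimpleGraph V) (X : Set V) : Set (Sym2 V) :=
  {e | e ∈ G.edgeSet ∧ ∃ u v : V, e = s(u, v) ∧ u ∈ X ∧ v ∉ X}

/-!
Switching at a vertex set `X` negates exactly the edges of the cut `δ(X)` and preserves the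
sign of every closed walk. By Harary's theorem a signed graph is balanced iff some switching
makes all of its edges positive, so `l(G, σ)` is the least number of negative edges over all
switchings of `σ`. Switching at `X` changes that number by `|δ⁺(X)| - |δ⁻(X)|`, whence both
claims.
-/

@[simp] lemma switch_mk {V : Type*} (σ : Sym2 V → ℤˣ) (ζ : V → ℤˣ) (u v : V) :
    switch σ ζ s(u, v) = ζ u * ζ v * σ s(u, v) := rfl

namespace SimpleGraph.Walk

variable {V : Type*} {G : SimpleGraph V} (σ : Sym2 V → ℤˣ)

def sign {u v : V} (w : G.Walk u v) : ℤˣ :=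
  (w.edges.map σ).prod

@[simp] lemma sign_nil {u : V} : (nil : G.Walk u u).sign σ = 1 := rfl

@[simp] lemma sign_cons {u v w : V} (h : G.Adj u v) (p : G.Walk v w) :
    (cons h p).sign σ = σ s(u, v) * p.sign σ := by
  simp [sign]

@[simp] lemma sign_append {u v w : V} (p : G.Walk u v) (q : G.Walk v w) :
    (p.append q).sign σ = p.sign σ * q.sign σ := by
  simp [sign, edges_append]

@[simp] lemma sign_reverse {u v : V} (p : G.Walk u v) : p.reverse.sign σ = p.sign σ := by
  simp [sign, edges_reverse, List.prod_reverse]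

@[simp] lemma sign_copy {u v u' v' : V} (p : G.Walk u v) (hu : u = u') (hv : v = v') :
    (p.copy hu hv).sign σ = p.sign σ := by
  subst hu hv; rfl

lemma sign_switch (ζ : V → ℤˣ) {u v : V} (w : G.Walk u v) :
    w.sign (switch σ ζ) = ζ u * ζ v * w.sign σ := by
  induction w with
  | nil => simp [Int.units_mul_self]
  | @cons u v w h p ih =>
    rw [sign_cons, sign_cons, ih, switch_mk]
    calc ζ u * ζ v * σ s(u, v) * (ζ v * ζ w * p.sign σ)
        = ζ u * ζ w * (σ s(u, v) * p.sign σ) * (ζ v * ζ v) := by ac_rfl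
      _ = ζ u * ζ w * (σ s(u, v) * p.sign σ) := by rw [Int.units_mul_self, mul_one]

end SimpleGraph.Walk

section

variable {V : Type*} {G : SimpleGraph V} {σ : Sym2 V → ℤˣ}

/-- The one closed walk of this shape that is not a cycle is the edge `uv` traversed back and
forth, whose sign is `σ(uv)² = 1`. -/
lemma IsBalanced.sign_cons_of_isPath (hb : IsBalanced G σ) {u v : V} (h : G.Adj u v)
    {q : G.Walk v u} (hq : q.IsPath) : (Walk.cons h q).sign σ = 1 := by
  by_cases huv : s(u, v) ∈ q.edges
  · cases q with
    | nil => exact absurd rfl h.ne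
    | @cons _ z _ _ q =>
      obtain ⟨hq, hvq⟩ := (Walk.cons_isPath_iff _ _).mp hq
      rcases List.mem_cons.mp huv with huv | huv
      · obtain rfl : z = u := by
          rcases Sym2.eq_iff.mp huv with ⟨h1, -⟩ | ⟨h1, -⟩
          · exact absurd h1 h.ne
          · exact h1.symm
        obtain rfl := Walk.eq_nil_iff_nil.mpr (Walk.isPath_iff_nil.mp hq)
        simp [Sym2.eq_swap, Int.units_mul_self]
      · exact absurd (Walk.snd_mem_support_of_mem_edges q huv) hvq
  · exact hb u _ ((Walk.cons_isCycle_iff q h).mpr ⟨hq, huv⟩)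

lemma IsBalanced.sign_bypass [DecidableEq V] (hb : IsBalanced G σ) {u v : V}
    (w : G.Walk u v) : w.bypass.sign σ = w.sign σ := by
  induction w with
  | nil => rfl
  | @cons u v w h p ih =>
    rw [Walk.bypass]
    split_ifs with hu
    · have hloop : σ s(u, v) * (p.bypass.takeUntil u hu).sign σ = 1 := by
        rw [← Walk.sign_cons]
        exact hb.sign_cons_of_isPath h ((Walk.bypass_isPath p).takeUntil hu)
      have hsplit := congrArg (Walk.sign σ) (Walk.take_spec p.bypass hu)
      rw [Walk.sign_append] at hsplit
      rw [Walk.sign_cons, ← ih, ← hsplit, ← mul_assoc, hloop, one_mul]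
    · rw [Walk.sign_cons, Walk.sign_cons, ih]

lemma IsBalanced.sign_eq_one (hb : IsBalanced G σ) {v : V} (w : G.Walk v v) :
    w.sign σ = 1 := by
  classical
  rw [← hb.sign_bypass w, Walk.eq_nil_iff_nil.mpr (Walk.isPath_iff_nil.mp w.bypass_isPath),
    Walk.sign_nil]

lemma isBalanced_switch_iff (ζ : V → ℤˣ) : IsBalanced G (switch σ ζ) ↔ IsBalanced G σ := by
  have hclosed : ∀ (v : V) (w : G.Walk v v), w.sign (switch σ ζ) = w.sign σ := by
    intro v w
    rw [Walk.sign_switch, Int.units_mul_self, one_mul]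
  exact forall₂_congr fun v w => by rw [← Walk.sign, ← Walk.sign, hclosed]

lemma isBalanced_of_forall_eq_one (h : ∀ e ∈ G.edgeSet, σ e = 1) : IsBalanced G σ :=
  fun _ w _ => List.prod_eq_one fun _ he => by
    obtain ⟨e, hew, rfl⟩ := List.mem_map.mp he
    exact h e (w.edges_subset_edgeSet hew)

/-- Harary's theorem: fixing a root in each component, switch every vertex by the sign of a walk
from its root; balance makes this independent of the walk. -/
lemma IsBalanced.exists_switch_eq_one (hb : IsBalanced G σ) :
    ∃ ζ : V → ℤˣ, ∀ e ∈ G.edgeSet, switch σ ζ e = 1 := by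
  have hwalk (v : V) : Nonempty (G.Walk (G.connectedComponentMk v).out v) :=
    ConnectedComponent.exact (G.connectedComponentMk v).out_eq
  refine ⟨fun v => (hwalk v).some.sign σ, fun e he => ?_⟩
  induction e using Sym2.ind with
  | _ u v =>
    rw [mem_edgeSet] at he
    have hroot : (G.connectedComponentMk u).out = (G.connectedComponentMk v).out := by
      rw [ConnectedComponent.connectedComponentMk_eq_of_adj he]
    have hcycle := hb.sign_eq_one
      ((hwalk u).some.append (.cons he ((hwalk v).some.reverse.copy rfl hroot.symm)))
    rw [Walk.sign_append, Walk.sign_cons, Walk.sign_copy, Walk.sign_reverse] at hcycle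
    rw [switch_mk, ← hcycle]
    ac_rfl

lemma mk_mem_cutEdges_iff {X : Set V} {u v : V} (h : G.Adj u v) :
    s(u, v) ∈ cutEdges G X ↔ (u ∈ X ↔ v ∉ X) := by
  constructor
  · rintro ⟨-, a, b, hab, ha, hb⟩
    rcases Sym2.eq_iff.mp hab with ⟨rfl, rfl⟩ | ⟨rfl, rfl⟩ <;> tauto
  · intro huv
    by_cases hu : u ∈ X
    · exact ⟨h, u, v, rfl, hu, huv.mp hu⟩
    · exact ⟨h, v, u, Sym2.eq_swap, by tauto, hu⟩

section Switching

variable {ζ : V → ℤˣ}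

lemma switch_eq_neg_of_mem_cutEdges {e : Sym2 V} (he : e ∈ cutEdges G {v | ζ v = -1}) :
    switch σ ζ e = -σ e := by
  obtain ⟨-, u, v, rfl, hu, hv⟩ := he
  rcases Int.units_eq_one_or (ζ v) with hv' | hv'
  · simp_all
  · exact absurd hv' hv

lemma switch_eq_of_not_mem_cutEdges {e : Sym2 V} (hE : e ∈ G.edgeSet)
    (he : e ∉ cutEdges G {v | ζ v = -1}) : switch σ ζ e = σ e := by
  induction e using Sym2.ind with
  | _ u v =>
    rw [mem_edgeSet] at hE
    rw [mk_mem_cutEdges_iff hE] at he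
    rcases Int.units_eq_one_or (ζ u) with hu | hu <;>
      rcases Int.units_eq_one_or (ζ v) with hv | hv <;> simp_all

variable (G σ ζ)

lemma ncard_negEdges_switch_add [Finite V] :
    (negEdges G (switch σ ζ)).ncard + {e ∈ cutEdges G {v | ζ v = -1} | σ e = -1}.ncard =
      (negEdges G σ).ncard + {e ∈ cutEdges G {v | ζ v = -1} | σ e = 1}.ncard := by
  set C := cutEdges G {v | ζ v = -1}
  have hC : C ⊆ G.edgeSet := fun _ he => he.1
  have hswitch_cut : negEdges G (switch σ ζ) ∩ C = {e ∈ C | σ e = 1} := by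
    ext e
    simp only [negEdges, Set.mem_inter_iff, Set.mem_ofPred_eq]
    constructor
    · rintro ⟨⟨-, h⟩, he⟩
      rw [switch_eq_neg_of_mem_cutEdges he, neg_eq_iff_eq_neg, neg_neg] at h
      exact ⟨he, h⟩
    · rintro ⟨he, h⟩
      exact ⟨⟨hC he, by rw [switch_eq_neg_of_mem_cutEdges he, h]⟩, he⟩
  have hswitch_rest : negEdges G (switch σ ζ) \ C = negEdges G σ \ C := by
    ext e
    simp only [negEdges, Set.mem_sdiff, Set.mem_ofPred_eq]
    constructor
    · rintro ⟨⟨hE, h⟩, he⟩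
      exact ⟨⟨hE, by rwa [switch_eq_of_not_mem_cutEdges hE he] at h⟩, he⟩
    · rintro ⟨⟨hE, h⟩, he⟩
      exact ⟨⟨hE, by rwa [switch_eq_of_not_mem_cutEdges hE he]⟩, he⟩
  have hcut : negEdges G σ ∩ C = {e ∈ C | σ e = -1} := by
    ext e
    simp only [negEdges, Set.mem_inter_iff, Set.mem_ofPred_eq]
    exact ⟨fun ⟨⟨_, h⟩, he⟩ => ⟨he, h⟩, fun ⟨he, h⟩ => ⟨⟨hC he, h⟩, he⟩⟩
  rw [← Set.ncard_inter_add_ncard_sdiff_eq_ncard (negEdges G (switch σ ζ)) C,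
    ← Set.ncard_inter_add_ncard_sdiff_eq_ncard (negEdges G σ) C, hswitch_cut, hswitch_rest,
    hcut]
  ring

lemma switch_one : switch σ 1 = σ := by
  funext e
  induction e using Sym2.ind with
  | _ u v => simp

lemma isBalanced_deleteEdges_negEdges_switch :
    IsBalanced (G.deleteEdges (negEdges G (switch σ ζ))) σ := by
  rw [← isBalanced_switch_iff ζ]
  refine isBalanced_of_forall_eq_one fun e he => ?_
  rw [edgeSet_deleteEdges] at he
  exact (Int.units_eq_one_or _).resolve_right fun h => he.2 ⟨he.1, h⟩

lemma frustIndex_le_ncard_negEdges_switch [Finite V] :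
    frustIndex G σ ≤ (negEdges G (switch σ ζ)).ncard := by
  have hfin : (negEdges G (switch σ ζ)).Finite := Set.toFinite _
  refine Nat.sInf_le ⟨hfin.toFinset, ?_, (Set.ncard_eq_toFinset_card _ hfin).symm, ?_⟩ <;>
    rw [Set.Finite.coe_toFinset]
  · exact fun e he => he.1
  · exact isBalanced_deleteEdges_negEdges_switch G σ ζ

lemma exists_ncard_negEdges_switch_le_frustIndex [Finite V] :
    ∃ ζ : V → ℤˣ, (negEdges G (switch σ ζ)).ncard ≤ frustIndex G σ := by
  have hall : G.edgeSet.Finite := Set.toFinite _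
  obtain ⟨S, -, hS, hbal⟩ : frustIndex G σ ∈ _ :=
    Nat.sInf_mem ⟨_, hall.toFinset, by simp, rfl, isBalanced_of_forall_eq_one (by simp)⟩
  obtain ⟨ζ, hζ⟩ := hbal.exists_switch_eq_one
  refine ⟨ζ, ?_⟩
  rw [← hS, ← Set.ncard_coe_finset]
  refine Set.ncard_le_ncard (fun e he => ?_) S.finite_toSet
  by_contra heS
  have hpos := hζ e (by rw [edgeSet_deleteEdges]; exact ⟨he.1, heS⟩)
  rw [he.2] at hpos
  exact absurd hpos (by decide)

end Switching

end

/-- If every cut has at least as many positive as negative edges then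
`l(Σ) = |E⁻|`; if some cut has more negative than positive edges then `l(Σ) < |E⁻|`. -/
theorem frustIndex_cut_criterion {V : Type*} [Fintype V] (G : SimpleGraph V)
    (σ : Sym2 V → ℤˣ) :
    ((∀ X : Set V,
        {e ∈ cutEdges G X | σ e = -1}.ncard ≤ {e ∈ cutEdges G X | σ e = 1}.ncard) →
      frustIndex G σ = (negEdges G σ).ncard) ∧
    ((∃ X : Set V,
        {e ∈ cutEdges G X | σ e = 1}.ncard < {e ∈ cutEdges G X | σ e = -1}.ncard) →
      frustIndex G σ < (negEdges G σ).ncard) := by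
  classical
  have hle : frustIndex G σ ≤ (negEdges G σ).ncard := by
    simpa only [switch_one] using frustIndex_le_ncard_negEdges_switch G σ 1
  refine ⟨fun hcut => le_antisymm hle ?_, fun ⟨X, hX⟩ => ?_⟩
  · obtain ⟨ζ, hζ⟩ := exists_ncard_negEdges_switch_le_frustIndex G σ
    have hcount := ncard_negEdges_switch_add G σ ζ
    have hζcut := hcut {v | ζ v = -1}
    omega
  · let ζ : V → ℤˣ := fun v => if v ∈ X then -1 else 1
    have hζX : {v | ζ v = -1} = X := by
      ext v
      by_cases hv : v ∈ X <;> simp [ζ, hv]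
    have hcount := ncard_negEdges_switch_add G σ ζ
    rw [hζX] at hcount
    have hζle := frustIndex_le_ncard_negEdges_switch G σ ζ
    omega
end

section
/- Let (G,sigma) be a finite signed graph, let X be a subset of V, and let zeta_X be the switching function with value -1 exactly on X. If there exists a graph automorphism alpha of G that is an isomorphism of signed graphs from (G, sigma^{zeta_X}) to (G, sigma) (i.e., sigma(alpha(u)alpha(v)) = sigma^{zeta_X}(uv) for every edge uv), then the cut delta(X) contains equally many positive edges and negative edges of sigma. -/
open SimpleGraph Finset


open scoped Classical in
/-- If switching a set `X` followed by a graph automorphism returns the original signed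
graph, then the cut `δ(X)` has equally many positive and negative edges. -/
theorem swaut_cut_balanced {V : Type*} [Fintype V] (G : SimpleGraph V)
    (σ : Sym2 V → ℤˣ) (X : Set V) (α : G ≃g G)
    (h : ∀ u v : V, G.Adj u v →
      σ s(α u, α v) = switch σ (fun w => if w ∈ X then -1 else 1) s(u, v)) :
    {e ∈ cutEdges G X | σ e = 1}.ncard = {e ∈ cutEdges G X | σ e = -1}.ncard := by
  classical
  -- pointwise: applying α flips the sign exactly on cut edges
  have key : ∀ e ∈ G.edgeFinset,
      σ (Sym2.map α e) = (if e ∈ cutEdges G X then -1 else 1) * σ e := by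
    intro e he
    induction e using Sym2.ind with
    | _ u v =>
      rw [SimpleGraph.mem_edgeFinset, SimpleGraph.mem_edgeSet] at he
      have h1 := h u v he
      have hcut : (s(u,v) ∈ cutEdges G X) ↔ ((u ∈ X) ≠ (v ∈ X)) := by
        constructor
        · rintro ⟨-, a, b, hab, ha, hb⟩
          rw [Sym2.eq_iff] at hab
          rcases hab with ⟨rfl, rfl⟩ | ⟨rfl, rfl⟩ <;> simp [ha, hb]
        · intro hne
          refine ⟨(SimpleGraph.mem_edgeSet _).2 he, ?_⟩
          by_cases hu : u ∈ X
          · have hv : v ∉ X := fun hv => hne (by simp [hu, hv])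
            exact ⟨u, v, rfl, hu, hv⟩
          · have hv : v ∈ X := by by_contra hv; exact hne (by simp [hu, hv])
            exact ⟨v, u, Sym2.eq_swap, hv, hu⟩
      have hm : Sym2.map α s(u,v) = s(α u, α v) := rfl
      rw [hm, h1, switch]
      simp only [Sym2.lift_mk]
      by_cases hu : u ∈ X <;> by_cases hv : v ∈ X <;>
        simp [hcut, hu, hv]
  -- α permutes the edge set, so summation of σ ∘ (map α) over edges equals that of σ
  have hsum : ∑ e ∈ G.edgeFinset, ((σ (Sym2.map α e) : ℤ))
      = ∑ e ∈ G.edgeFinset, ((σ e : ℤ)) := by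
    apply Finset.sum_nbij' (fun e => Sym2.map α e) (fun e => Sym2.map α.symm e)
    · intro e he
      rw [SimpleGraph.mem_edgeFinset] at he ⊢
      exact α.toHom.map_mem_edgeSet he
    · intro e he
      rw [SimpleGraph.mem_edgeFinset] at he ⊢
      exact α.symm.toHom.map_mem_edgeSet he
    · intro e _
      induction e using Sym2.ind with
      | _ u v => simp
    · intro e _
      induction e using Sym2.ind with
      | _ u v => simp
    · intro e _
      rfl
  -- hence the sum of σ over cut edges is zero
  set cutF : Finset (Sym2 V) := G.edgeFinset.filter (· ∈ cutEdges G X) with hcutF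
  have hzero : ∑ e ∈ cutF, ((σ e : ℤ)) = 0 := by
    have h2 : ∑ e ∈ G.edgeFinset,
        (((if e ∈ cutEdges G X then -1 else 1) * σ e : ℤˣ) : ℤ)
        = ∑ e ∈ G.edgeFinset, ((σ e : ℤ)) := by
      rw [← hsum]
      exact Finset.sum_congr rfl fun e he => by rw [key e he]
    have h3 : ∑ e ∈ G.edgeFinset,
        ((((if e ∈ cutEdges G X then -1 else 1) * σ e : ℤˣ) : ℤ) - ((σ e : ℤ))) = 0 := by
      rw [Finset.sum_sub_distrib, h2, sub_self]
    have h4 : ∑ e ∈ G.edgeFinset,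
        ((((if e ∈ cutEdges G X then -1 else 1) * σ e : ℤˣ) : ℤ) - ((σ e : ℤ)))
        = ∑ e ∈ cutF, (-2 * ((σ e : ℤ))) := by
      rw [hcutF, Finset.sum_filter]
      refine Finset.sum_congr rfl fun e _ => ?_
      by_cases hc : e ∈ cutEdges G X <;> simp [hc] <;> push_cast <;> ring
    rw [h4, ← Finset.mul_sum] at h3
    linarith
  -- split the cut into positive and negative edges
  set P : Finset (Sym2 V) := cutF.filter (fun e => σ e = 1) with hP
  set N : Finset (Sym2 V) := cutF.filter (fun e => σ e = -1) with hN
  have hsplit : ∑ e ∈ cutF, ((σ e : ℤ)) = (P.card : ℤ) - (N.card : ℤ) := by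
    have hdisj : Disjoint P N := by
      rw [Finset.disjoint_left]
      intro e heP heN
      have h1 := (Finset.mem_filter.1 heP).2
      have h2 := (Finset.mem_filter.1 heN).2
      rw [h1] at h2
      exact absurd h2 (by decide)
    have hunion : P ∪ N = cutF := by
      ext e
      simp only [hP, hN, Finset.mem_union, Finset.mem_filter]
      constructor
      · rintro (⟨he, -⟩ | ⟨he, -⟩) <;> exact he
      · intro he
        rcases Int.units_eq_one_or (σ e) with h1 | h1
        · exact Or.inl ⟨he, h1⟩
        · exact Or.inr ⟨he, h1⟩
    rw [← hunion, Finset.sum_union hdisj]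
    have hPsum : ∑ e ∈ P, ((σ e : ℤ)) = (P.card : ℤ) := by
      have hone : ∀ e ∈ P, ((σ e : ℤ)) = 1 := fun e he => by
        rw [(Finset.mem_filter.1 he).2]; rfl
      rw [Finset.sum_congr rfl hone]; simp
    have hNsum : ∑ e ∈ N, ((σ e : ℤ)) = -(N.card : ℤ) := by
      have hone : ∀ e ∈ N, ((σ e : ℤ)) = -1 := fun e he => by
        rw [(Finset.mem_filter.1 he).2]; rfl
      rw [Finset.sum_congr rfl hone]; simp
    rw [hPsum, hNsum]; ring
  have hcard : P.card = N.card := by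
    rw [hzero] at hsplit
    omega
  -- translate the Set.ncard statement into the finset cards
  have hPe : {e ∈ cutEdges G X | σ e = 1} = (↑P : Set (Sym2 V)) := by
    ext e
    simp only [hP, hcutF, Set.mem_setOf_eq, Finset.coe_filter, Set.mem_setOf_eq,
      Finset.mem_filter, SimpleGraph.mem_edgeFinset]
    constructor
    · rintro ⟨he, hs⟩; exact ⟨⟨he.1, he⟩, hs⟩
    · rintro ⟨⟨-, he⟩, hs⟩; exact ⟨he, hs⟩
  have hNe : {e ∈ cutEdges G X | σ e = -1} = (↑N : Set (Sym2 V)) := by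
    ext e
    simp only [hN, hcutF, Set.mem_setOf_eq, Finset.coe_filter, Set.mem_setOf_eq,
      Finset.mem_filter, SimpleGraph.mem_edgeFinset]
    constructor
    · rintro ⟨he, hs⟩; exact ⟨⟨he.1, he⟩, hs⟩
    · rintro ⟨⟨-, he⟩, hs⟩; exact ⟨he, hs⟩
  rw [hPe, hNe, Set.ncard_coe_finset, Set.ncard_coe_finset, hcard]
end

section
/- For a signature sigma of the Petersen graph P and a graph automorphism gamma of P, let sigma^gamma be the transported signature defined by sigma^gamma(gamma(u)gamma(v)) = sigma(uv). The set SwProj(sigma) = {gamma in Aut(P) : sigma^gamma is switching equivalent to sigma} is a subgroup of Aut(P) (it is the isomorphic projection of the switching automorphism group of (P,sigma)). For the six representative signatures sigma(+P), sigma(P_1), sigma(P_2,2), sigma(P_2,3), sigma(P_3,2), sigma(P_3,3), this subgroup has order 120, 8, 4, 8, 60, 120 respectively, and is isomorphic respectively to S_5, the dihedral group of order 8, the Klein four-group, the dihedral group of order 8, the alternating group A_5, and S_5. In particular, for sigma(P_3,2) this subgroup consists exactly of the automorphisms of P induced by even permutations of {1,2,3,4,5}. -/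
open SimpleGraph Finset


/-- Vertices of the Petersen graph: 2-element subsets of `Fin 5`. -/
abbrev PV : Type := {s : Finset (Fin 5) // s.card = 2}

/-- The Petersen graph as the Kneser graph K(5,2). -/
def petersen : SimpleGraph PV where
  Adj a b := Disjoint a.1 b.1
  symm := ⟨fun a b h => h.symm⟩
  loopless := ⟨fun a h => by
    have h2 := a.2
    rw [disjoint_self.mp h] at h2
    simp at h2⟩

def v12 : PV := ⟨{0, 1}, by decide⟩
def v13 : PV := ⟨{0, 2}, by decide⟩
def v14 : PV := ⟨{0, 3}, by decide⟩
def v15 : PV := ⟨{0, 4}, by decide⟩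
def v23 : PV := ⟨{1, 2}, by decide⟩
def v24 : PV := ⟨{1, 3}, by decide⟩
def v25 : PV := ⟨{1, 4}, by decide⟩
def v34 : PV := ⟨{2, 3}, by decide⟩
def v35 : PV := ⟨{2, 4}, by decide⟩
def v45 : PV := ⟨{3, 4}, by decide⟩

/-- The signature with negative edge set `N` (and all other edges positive). -/
def sgn (N : Finset (Sym2 PV)) : Sym2 PV → ℤˣ := fun e => if e ∈ N then -1 else 1

/-- The six representative signatures `σ(+P)`, `σ(P_1)`, `σ(P_{2,2})`, `σ(P_{2,3})`,
`σ(P_{3,2})`, `σ(P_{3,3})` of the Petersen graph. -/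
def reps : Fin 6 → (Sym2 PV → ℤˣ) :=
  ![sgn ∅,
    sgn {s(v12, v34)},
    sgn {s(v14, v25), s(v34, v15)},
    sgn {s(v13, v24), s(v14, v23)},
    sgn {s(v14, v25), s(v34, v15), s(v24, v35)},
    sgn {s(v12, v34), s(v13, v24), s(v14, v23)}]

/-- The projection of the switching automorphism group of `(P,σ)` into the permutations of
the vertices: adjacency-preserving permutations `γ` such that the transported signature
`σ^γ` is switching equivalent to `σ`. -/
def swProj {V : Type*} (G : SimpleGraph V) (σ : Sym2 V → ℤˣ) : Set (Equiv.Perm V) :=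
  {γ | (∀ u v : V, G.Adj (γ u) (γ v) ↔ G.Adj u v) ∧
    ∃ ζ : V → ℤˣ, ∀ u v : V, G.Adj u v → σ s(γ u, γ v) = ζ u * σ s(u, v) * ζ v}

/-- The permutation of the vertices of the Petersen graph induced by a permutation of
`{1,…,5}`. -/
def indPerm (π : Equiv.Perm (Fin 5)) : Equiv.Perm PV where
  toFun s := ⟨s.1.image π, by rw [Finset.card_image_of_injective _ π.injective]; exact s.2⟩
  invFun s := ⟨s.1.image π.symm,
    by rw [Finset.card_image_of_injective _ π.symm.injective]; exact s.2⟩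
  left_inv s := by
    apply Subtype.ext
    simp [Finset.image_image, Function.comp_def]
  right_inv s := by
    apply Subtype.ext
    simp [Finset.image_image, Function.comp_def]

/-!
Every automorphism of `P` is induced by a permutation of `{1, …, 5}`: the independent sets
of size four are exactly the stars `{v | i ∈ v}`, so an automorphism permutes the stars and
hence the points. On a connected graph a switching function is determined, up to a global
sign, by the ratios `σ' e * σ e` along paths from a root; so whether `σ^γ` is switching
equivalent to `σ` is decided by one canonical switching function, and the resulting subsets of
`S₅` are computed and recognised as the listed subgroups.
-/

section Switching

variable {V : Type*}

def chainProd (τ : V → V → ℤˣ) : List V → ℤˣ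
  | a :: b :: l => τ a b * chainProd τ (b :: l)
  | _ => 1

theorem chainProd_eq_mul {G : SimpleGraph V} {τ : V → V → ℤˣ} {ζ : V → ℤˣ}
    (hτ : ∀ u v, G.Adj u v → τ u v = ζ u * ζ v) :
    ∀ {l : List V} {a b : V}, l.IsChain G.Adj → l.head? = some a → l.getLast? = some b →
      chainProd τ l = ζ a * ζ b
  | [], _, _, _, h, _ => by simp at h
  | [x], a, b, _, ha, hb => by
    simp only [List.head?_cons, Option.some.injEq, List.getLast?_singleton] at ha hb
    subst ha hb
    exact (Int.units_mul_self _).symm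
  | x :: y :: l, a, b, hc, ha, hb => by
    rw [List.isChain_cons_cons] at hc
    simp only [List.head?_cons, Option.some.injEq] at ha
    subst ha
    rw [chainProd, hτ _ _ hc.1, chainProd_eq_mul hτ hc.2 rfl (by simpa using hb), mul_assoc,
      ← mul_assoc (ζ y), Int.units_mul_self, one_mul]

def pathSwitching (σ σ' : Sym2 V → ℤˣ) (path : V → List V) (v : V) : ℤˣ :=
  chainProd (fun a b => σ' s(a, b) * σ s(a, b)) (path v)

theorem exists_switching_iff {G : SimpleGraph V} {σ σ' : Sym2 V → ℤˣ} {r : V}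
    {path : V → List V} (hpath : ∀ v, (path v).IsChain G.Adj ∧ (path v).head? = some r ∧
      (path v).getLast? = some v) :
    (∃ ζ : V → ℤˣ, ∀ u v, G.Adj u v → σ' s(u, v) = ζ u * σ s(u, v) * ζ v) ↔
      ∀ u v, G.Adj u v → σ' s(u, v) =
        pathSwitching σ σ' path u * σ s(u, v) * pathSwitching σ σ' path v := by
  refine ⟨fun ⟨ζ, hζ⟩ => ?_, fun h => ⟨_, h⟩⟩
  have hτ : ∀ u v, G.Adj u v → σ' s(u, v) * σ s(u, v) = ζ u * ζ v := fun u v huv => by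
    rw [hζ u v huv, mul_right_comm (ζ u * σ s(u, v)), mul_assoc (ζ u), Int.units_mul_self,
      mul_one]
  have hz : ∀ v, pathSwitching σ σ' path v = ζ r * ζ v := fun v =>
    chainProd_eq_mul hτ (hpath v).1 (hpath v).2.1 (hpath v).2.2
  intro u v huv
  calc σ' s(u, v) = ζ r * ζ r * (ζ u * σ s(u, v) * ζ v) := by
        rw [Int.units_mul_self, one_mul, hζ u v huv]
    _ = ζ r * ζ u * σ s(u, v) * (ζ r * ζ v) := by ac_rfl
    _ = _ := by rw [hz, hz]

end Switching

instance : DecidableRel petersen.Adj := fun a b =>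
  inferInstanceAs (Decidable (Disjoint a.1 b.1))

theorem indPerm_adj (π : Equiv.Perm (Fin 5)) (u v : PV) :
    petersen.Adj (indPerm π u) (indPerm π v) ↔ petersen.Adj u v :=
  disjoint_image π.injective

def indHom : Equiv.Perm (Fin 5) →* Equiv.Perm PV :=
  MonoidHom.mk' indPerm fun π ρ => Equiv.ext fun v => Subtype.ext <| by
    simp [indPerm, image_image, Function.comp_def]

theorem indHom_injective : Function.Injective indHom :=
  (injective_iff_map_eq_one indHom).mpr (by decide +kernel)

def pointStar (i : Fin 5) : Finset PV := univ.filter (i ∈ ·.1)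

theorem card_pointStar : ∀ i, (pointStar i).card = 4 := by decide +kernel

theorem pointStar_injective : Function.Injective pointStar := by decide +kernel

set_option synthInstance.maxSize 2000 in
set_option synthInstance.maxHeartbeats 1000000 in
theorem exists_mem_of_pairwise_not_adj : ∀ x y z w : PV,
    ¬petersen.Adj x y → ¬petersen.Adj x z → ¬petersen.Adj x w → ¬petersen.Adj y z →
    ¬petersen.Adj y w → ¬petersen.Adj z w → x ≠ y → x ≠ z → x ≠ w → y ≠ z → y ≠ w → z ≠ w →
    ∃ i, i ∈ x.1 ∧ i ∈ y.1 ∧ i ∈ z.1 ∧ i ∈ w.1 := by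
  decide +kernel

theorem exists_subset_pointStar {s : Finset PV} (hs : s.card = 4)
    (hind : ∀ u ∈ s, ∀ v ∈ s, ¬petersen.Adj u v) : ∃ i, s ⊆ pointStar i := by
  obtain ⟨x, y, z, w, hxy, hxz, hxw, hyz, hyw, hzw, rfl⟩ := card_eq_four.mp hs
  simp only [mem_insert, mem_singleton, forall_eq_or_imp, forall_eq] at hind
  obtain ⟨i, hx, hy, hz, hw⟩ := exists_mem_of_pairwise_not_adj x y z w hind.1.2.1
    hind.1.2.2.1 hind.1.2.2.2 hind.2.1.2.2.1 hind.2.1.2.2.2 hind.2.2.1.2.2.2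
    hxy hxz hxw hyz hyw hzw
  exact ⟨i, by simp [insert_subset_iff, pointStar, hx, hy, hz, hw]⟩

theorem exists_eq_indPerm {γ : Equiv.Perm PV}
    (hγ : ∀ u v, petersen.Adj (γ u) (γ v) ↔ petersen.Adj u v) :
    ∃ π : Equiv.Perm (Fin 5), γ = indPerm π := by
  have hstar : ∀ i, ∃ j, (pointStar i).map γ.toEmbedding = pointStar j := fun i => by
    obtain ⟨j, hj⟩ := exists_subset_pointStar (s := (pointStar i).map γ.toEmbedding)
      (by rw [card_map, card_pointStar]) (by
        simp only [mem_map, Equiv.coe_toEmbedding, forall_exists_index, and_imp,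
          forall_apply_eq_imp_iff₂, hγ]
        intro u hu v hv huv
        exact disjoint_left.mp huv (mem_filter.mp hu).2 (mem_filter.mp hv).2)
    exact ⟨j, eq_of_subset_of_card_le hj (by rw [card_map, card_pointStar, card_pointStar])⟩
  choose f hf using hstar
  have hf_inj : Function.Injective f := fun i j hij =>
    pointStar_injective (map_injective γ.toEmbedding (by rw [hf, hf, hij]))
  refine ⟨Equiv.ofBijective f hf_inj.bijective_of_finite, Equiv.ext fun v => Subtype.ext ?_⟩
  refine (eq_of_subset_of_card_le (fun x hx => ?_) ?_).symm
  · obtain ⟨i, hi, rfl⟩ := mem_image.mp hx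
    have : γ v ∈ pointStar (f i) := by
      rw [← hf]
      exact mem_map_of_mem _ (mem_filter.mpr ⟨mem_univ _, hi⟩)
    exact (mem_filter.mp this).2
  · rw [(γ v).2]
    exact (indPerm _ v).2.ge

/-- The neighbours of `v12` are `v34`, `v35`, `v45`, and every other vertex is adjacent to
exactly one of them. -/
def pathFromV12 (v : PV) : List PV :=
  v12 :: if v = v12 then [] else [v34, v35, v45].filter (petersen.Adj · v) ++ [v]

theorem pathFromV12_spec : ∀ v, (pathFromV12 v).IsChain petersen.Adj ∧
    (pathFromV12 v).head? = some v12 ∧ (pathFromV12 v).getLast? = some v := by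
  decide +kernel

def petersenEdges : List (PV × PV) :=
  [(v12, v34), (v12, v35), (v12, v45), (v34, v15), (v34, v25), (v35, v14), (v35, v24),
    (v45, v13), (v45, v23), (v15, v23), (v15, v24), (v25, v13), (v25, v14), (v14, v23),
    (v13, v24)]

theorem adj_iff_mem_petersenEdges : ∀ u v,
    petersen.Adj u v ↔ (u, v) ∈ petersenEdges ∨ (v, u) ∈ petersenEdges := by
  decide +kernel

-- Stated on the explicit edge list rather than on all pairs of vertices, which keeps the
-- computations over all 120 permutations below feasible.
def IsSwitchingPerm (σ : Sym2 PV → ℤˣ) (π : Equiv.Perm (Fin 5)) : Prop :=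
  ∀ e ∈ petersenEdges, σ s(indPerm π e.1, indPerm π e.2) =
    pathSwitching σ (fun e => σ (e.map (indPerm π))) pathFromV12 e.1 * σ s(e.1, e.2) *
      pathSwitching σ (fun e => σ (e.map (indPerm π))) pathFromV12 e.2

instance (σ : Sym2 PV → ℤˣ) (π : Equiv.Perm (Fin 5)) : Decidable (IsSwitchingPerm σ π) := by
  unfold IsSwitchingPerm; infer_instance

theorem indPerm_mem_swProj_iff {σ : Sym2 PV → ℤˣ} {π : Equiv.Perm (Fin 5)} :
    indPerm π ∈ swProj petersen σ ↔ IsSwitchingPerm σ π := by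
  have key := exists_switching_iff (σ := σ) (σ' := fun e => σ (e.map (indPerm π)))
    pathFromV12_spec
  refine ⟨fun h e he => key.mp h.2 e.1 e.2 ((adj_iff_mem_petersenEdges _ _).mpr (.inl he)),
    fun h => ⟨indPerm_adj π, key.mpr fun u v huv => ?_⟩⟩
  rcases (adj_iff_mem_petersenEdges u v).mp huv with huv | hvu
  · exact h _ huv
  · change σ s(indPerm π u, indPerm π v) = _
    rw [Sym2.eq_swap (a := indPerm π u), h _ hvu]
    dsimp only
    rw [Sym2.eq_swap (a := v)]
    ac_rfl

theorem swProj_petersen_eq_map {σ : Sym2 PV → ℤˣ} {K : Subgroup (Equiv.Perm (Fin 5))}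
    (hK : ∀ π, IsSwitchingPerm σ π ↔ π ∈ K) : swProj petersen σ = K.map indHom := by
  ext γ
  refine ⟨fun hγ => ?_, ?_⟩
  · obtain ⟨π, rfl⟩ := exists_eq_indPerm hγ.1
    exact ⟨π, (hK π).mp (indPerm_mem_swProj_iff.mp hγ), rfl⟩
  · rintro ⟨π, hπ, rfl⟩
    exact indPerm_mem_swProj_iff.mpr ((hK π).mpr hπ)

theorem exists_subgroup_of_swProj_eq_map {A : Type*} [Group A] {σ : Sym2 PV → ℤˣ}
    {K : Subgroup (Equiv.Perm (Fin 5))} (h : swProj petersen σ = K.map indHom) (e : K ≃* A)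
    {n : ℕ} (hA : Nat.card A = n) :
    ∃ H : Subgroup (Equiv.Perm PV), ↑H = swProj petersen σ ∧ Nat.card H = n ∧
      Nonempty (H ≃* A) :=
  let e' := (K.equivMapOfInjective indHom indHom_injective).symm.trans e
  ⟨K.map indHom, h.symm, (Nat.card_congr e'.toEquiv).trans hA, ⟨e'⟩⟩

def dihedralPerm : DihedralGroup 4 → Equiv.Perm (Fin 5)
  | .r i => c[0, 2, 1, 3] ^ i.val
  | .sr i => c[2, 3] * c[0, 2, 1, 3] ^ i.val

/-- `D₄` as the stabiliser of the partition `{{1, 2}, {3, 4}}` of `{1, …, 5}`. -/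
def dihedralHom : DihedralGroup 4 →* Equiv.Perm (Fin 5) :=
  MonoidHom.mk' dihedralPerm (by decide +kernel)

theorem dihedralHom_injective : Function.Injective dihedralHom :=
  (injective_iff_map_eq_one dihedralHom).mpr (by decide +kernel)

def kleinPerm (x : Multiplicative (ZMod 2 × ZMod 2)) : Equiv.Perm (Fin 5) :=
  (Equiv.swap 1 2 * Equiv.swap 3 4) ^ x.toAdd.1.val *
    (Equiv.swap 1 3 * Equiv.swap 2 4) ^ x.toAdd.2.val

def kleinHom : Multiplicative (ZMod 2 × ZMod 2) →* Equiv.Perm (Fin 5) :=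
  MonoidHom.mk' kleinPerm (by decide +kernel)

theorem kleinHom_injective : Function.Injective kleinHom :=
  (injective_iff_map_eq_one kleinHom).mpr (by decide +kernel)

theorem nat_card_perm_fin_five : Nat.card (Equiv.Perm (Fin 5)) = 120 := by
  rw [Nat.card_perm, Nat.card_fin]; rfl

theorem swProj_reps_zero : swProj petersen (reps 0) = (⊤ : Subgroup _).map indHom :=
  swProj_petersen_eq_map fun π =>
    iff_of_true ((by decide +kernel : ∀ π, IsSwitchingPerm (reps 0) π) π) (Subgroup.mem_top π)

theorem swProj_reps_one : swProj petersen (reps 1) = dihedralHom.range.map indHom :=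
  swProj_petersen_eq_map (by decide +kernel)

theorem swProj_reps_two : swProj petersen (reps 2) = kleinHom.range.map indHom :=
  swProj_petersen_eq_map (by decide +kernel)

theorem swProj_reps_three : swProj petersen (reps 3) = dihedralHom.range.map indHom :=
  swProj_petersen_eq_map (by decide +kernel)

theorem swProj_reps_four : swProj petersen (reps 4) = (alternatingGroup (Fin 5)).map indHom :=
  swProj_petersen_eq_map fun π =>
    ((by decide +kernel : ∀ π, IsSwitchingPerm (reps 4) π ↔ π.sign = 1) π).trans
      Equiv.Perm.mem_alternatingGroup.symm

theorem swProj_reps_five : swProj petersen (reps 5) = (⊤ : Subgroup _).map indHom :=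
  swProj_petersen_eq_map fun π =>
    iff_of_true ((by decide +kernel : ∀ π, IsSwitchingPerm (reps 5) π) π) (Subgroup.mem_top π)

/-- For each representative signature `σ`, the set `swProj petersen σ` is a subgroup of
the permutation group of the vertices of `P`, of order `120, 8, 4, 8, 60, 120`
respectively, isomorphic to `S₅`, the dihedral group of order 8, the Klein four-group,
the dihedral group of order 8, `A₅` and `S₅` respectively; and for `σ(P_{3,2})` it
consists exactly of the automorphisms induced by even permutations of `{1,…,5}`. -/
theorem petersen_switching_automorphism_groups :
    (∃ H : Subgroup (Equiv.Perm PV), ↑H = swProj petersen (reps 0) ∧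
      Nat.card H = 120 ∧ Nonempty (H ≃* Equiv.Perm (Fin 5))) ∧
    (∃ H : Subgroup (Equiv.Perm PV), ↑H = swProj petersen (reps 1) ∧
      Nat.card H = 8 ∧ Nonempty (H ≃* DihedralGroup 4)) ∧
    (∃ H : Subgroup (Equiv.Perm PV), ↑H = swProj petersen (reps 2) ∧
      Nat.card H = 4 ∧ Nonempty (H ≃* Multiplicative (ZMod 2 × ZMod 2))) ∧
    (∃ H : Subgroup (Equiv.Perm PV), ↑H = swProj petersen (reps 3) ∧
      Nat.card H = 8 ∧ Nonempty (H ≃* DihedralGroup 4)) ∧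
    (∃ H : Subgroup (Equiv.Perm PV), ↑H = swProj petersen (reps 4) ∧
      Nat.card H = 60 ∧ Nonempty (H ≃* alternatingGroup (Fin 5))) ∧
    (∃ H : Subgroup (Equiv.Perm PV), ↑H = swProj petersen (reps 5) ∧
      Nat.card H = 120 ∧ Nonempty (H ≃* Equiv.Perm (Fin 5))) ∧
    swProj petersen (reps 4) =
      {γ | ∃ π : Equiv.Perm (Fin 5), π ∈ alternatingGroup (Fin 5) ∧ γ = indPerm π} := by
  have dihedral := (MonoidHom.ofInjective dihedralHom_injective).symm
  refine ⟨exists_subgroup_of_swProj_eq_map swProj_reps_zero Subgroup.topEquiv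
      nat_card_perm_fin_five,
    exists_subgroup_of_swProj_eq_map swProj_reps_one dihedral DihedralGroup.nat_card,
    exists_subgroup_of_swProj_eq_map swProj_reps_two
      (MonoidHom.ofInjective kleinHom_injective).symm (by simp),
    exists_subgroup_of_swProj_eq_map swProj_reps_three dihedral DihedralGroup.nat_card,
    exists_subgroup_of_swProj_eq_map swProj_reps_four (MulEquiv.refl _)
      (by rw [nat_card_alternatingGroup, Nat.card_fin]; rfl),
    exists_subgroup_of_swProj_eq_map swProj_reps_five Subgroup.topEquiv
      nat_card_perm_fin_five, ?_⟩
  rw [swProj_reps_four, Subgroup.coe_map]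
  ext γ
  exact ⟨fun ⟨π, hπ, h⟩ => ⟨π, hπ, h.symm⟩, fun ⟨π, hπ, h⟩ => ⟨π, hπ, h.symm⟩⟩
end

section
/- Let (G,sigma) be a finite signed graph. Then (G,sigma) is clusterable if and only if no negative edge joins two vertices lying in the same connected component of the spanning subgraph (V, E^+(sigma)). Moreover, if (G,sigma) is clusterable, then its cluster number clu(G,sigma) equals the chromatic number of the simple graph whose vertices are the connected components of (V, E^+(sigma)), with two distinct components adjacent exactly when some negative edge of (G,sigma) joins a vertex of one to a vertex of the other. -/
open SimpleGraph Finset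

/-! A clustering is constant on the components of the positive subgraph, so it is the pullback
of a labelling of the components; it is a clustering exactly when that labelling is a proper
colouring of the component graph and no negative edge lies inside a component. Hence clusterings
with `n` labels and `n`-colourings of the component graph correspond. -/

/-- A signed graph is clusterable if the vertices can be partitioned into clusters so that
edges within a cluster are positive and edges between clusters are negative.  We record a
clustering by its cluster-assignment function. -/
def Clusterable {V : Type*} (G : SimpleGraph V) (σ : Sym2 V → ℤˣ) : Prop :=
  ∃ c : V → ℕ, ∀ u v : V, G.Adj u v → (σ s(u, v) = 1 ↔ c u = c v)

/-- The cluster number: the least number of clusters in a clustering. -/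
noncomputable def clusterNum {V : Type*} (G : SimpleGraph V) (σ : Sym2 V → ℤˣ) : ℕ :=
  sInf {n | ∃ c : V → Fin n, ∀ u v : V, G.Adj u v → (σ s(u, v) = 1 ↔ c u = c v)}

/-- The inclusterability index: the least number of edges whose deletion yields a
clusterable signed graph. -/
noncomputable def inclusterIndex {V : Type*} (G : SimpleGraph V) (σ : Sym2 V → ℤˣ) : ℕ :=
  sInf {n | ∃ S : Finset (Sym2 V), ↑S ⊆ G.edgeSet ∧ S.card = n ∧
    Clusterable (G.deleteEdges ↑S) σ}

/-- The spanning subgraph of positive edges. -/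
def posSubgraph {V : Type*} (G : SimpleGraph V) (σ : Sym2 V → ℤˣ) : SimpleGraph V where
  Adj u v := G.Adj u v ∧ σ s(u, v) = 1
  symm := ⟨by
    rintro u v ⟨h1, h2⟩
    exact ⟨h1.symm, by rwa [Sym2.eq_swap] at h2⟩⟩
  loopless := ⟨fun v h => G.loopless.irrefl v h.1⟩

/-- The graph on the connected components of the positive subgraph, two components being
adjacent when some negative edge joins them. -/
def compGraph {V : Type*} (G : SimpleGraph V) (σ : Sym2 V → ℤˣ) :
    SimpleGraph (posSubgraph G σ).ConnectedComponent where
  Adj C D := C ≠ D ∧ ∃ u v : V, G.Adj u v ∧ σ s(u, v) = -1 ∧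
    (posSubgraph G σ).connectedComponentMk u = C ∧
    (posSubgraph G σ).connectedComponentMk v = D
  symm := ⟨by
    rintro C D ⟨hne, u, v, h1, h2, h3, h4⟩
    exact ⟨hne.symm, v, u, h1.symm, by rwa [Sym2.eq_swap] at h2, h4, h3⟩⟩
  loopless := ⟨fun C h => h.1 rfl⟩

def IsClustering {V α : Type*} (G : SimpleGraph V) (σ : Sym2 V → ℤˣ) (c : V → α) : Prop :=
  ∀ u v : V, G.Adj u v → (σ s(u, v) = 1 ↔ c u = c v)

namespace IsClustering

variable {V α β : Type*} {G : SimpleGraph V} {σ : Sym2 V → ℤˣ} {c : V → α}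

theorem comp_injective (hc : IsClustering G σ c) {g : α → β} (hg : Function.Injective g) :
    IsClustering G σ (g ∘ c) :=
  fun u v huv => (hc u v huv).trans hg.eq_iff.symm

theorem eq_of_reachable (hc : IsClustering G σ c) {u v : V}
    (h : (posSubgraph G σ).Reachable u v) : c u = c v := by
  obtain ⟨w⟩ := h
  induction w with
  | nil => rfl
  | cons h _ ih => exact ((hc _ _ h.1).mp h.2).trans ih

theorem ne_of_neg (hc : IsClustering G σ c) {u v : V} (huv : G.Adj u v)
    (hneg : σ s(u, v) = -1) : c u ≠ c v := fun heq => by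
  have hpos := (hc u v huv).mpr heq
  rw [hneg] at hpos
  exact absurd hpos (by decide)

theorem not_reachable_of_neg (hc : IsClustering G σ c) {u v : V} (huv : G.Adj u v)
    (hneg : σ s(u, v) = -1) : ¬ (posSubgraph G σ).Reachable u v :=
  fun h => hc.ne_of_neg huv hneg (hc.eq_of_reachable h)

def toColoring (hc : IsClustering G σ c) : (compGraph G σ).Coloring α :=
  Coloring.mk (ConnectedComponent.lift c fun _ _ p _ => hc.eq_of_reachable p.reachable) <| by
    rintro _ _ ⟨-, u, v, huv, hneg, rfl, rfl⟩
    exact hc.ne_of_neg huv hneg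

end IsClustering

section ComponentGraph

variable {V α : Type*} {G : SimpleGraph V} {σ : Sym2 V → ℤˣ}

theorem isClustering_coloring_comp_connectedComponentMk
    (hG : ∀ u v : V, G.Adj u v → σ s(u, v) = -1 → ¬ (posSubgraph G σ).Reachable u v)
    (f : (compGraph G σ).Coloring α) :
    IsClustering G σ (f ∘ (posSubgraph G σ).connectedComponentMk) := by
  refine fun u v huv => ⟨fun hpos => ?_, fun heq => ?_⟩
  · exact congrArg f (ConnectedComponent.connectedComponentMk_eq_of_adj ⟨huv, hpos⟩)
  · by_contra hne
    have hneg : σ s(u, v) = -1 := Int.units_ne_iff_eq_neg.mp hne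
    by_cases hsame : (posSubgraph G σ).connectedComponentMk u =
        (posSubgraph G σ).connectedComponentMk v
    · exact hG u v huv hneg (ConnectedComponent.exact hsame)
    · exact f.valid ⟨hsame, u, v, huv, hneg, rfl, rfl⟩ heq

theorem colorable_compGraph_iff
    (hG : ∀ u v : V, G.Adj u v → σ s(u, v) = -1 → ¬ (posSubgraph G σ).Reachable u v)
    (n : ℕ) : (compGraph G σ).Colorable n ↔ ∃ c : V → Fin n, IsClustering G σ c :=
  ⟨fun ⟨f⟩ => ⟨_, isClustering_coloring_comp_connectedComponentMk hG f⟩,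
    fun ⟨_, hc⟩ => ⟨hc.toColoring⟩⟩

end ComponentGraph

/-- A finite signed graph is clusterable iff no negative edge joins two vertices in the
same component of the positive subgraph; and in that case the cluster number equals the
chromatic number of the component graph. -/
theorem clusterable_iff_and_clusterNum {V : Type*} [Fintype V] (G : SimpleGraph V)
    (σ : Sym2 V → ℤˣ) :
    (Clusterable G σ ↔ ∀ u v : V, G.Adj u v → σ s(u, v) = -1 →
      ¬ (posSubgraph G σ).Reachable u v) ∧
    (Clusterable G σ → (clusterNum G σ : ℕ∞) = (compGraph G σ).chromaticNumber) := by
  have clusterable_iff : Clusterable G σ ↔ ∀ u v : V, G.Adj u v → σ s(u, v) = -1 →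
      ¬ (posSubgraph G σ).Reachable u v := by
    refine ⟨fun ⟨_, hc⟩ _ _ => IsClustering.not_reachable_of_neg hc, fun hG => ?_⟩
    obtain ⟨g, hg⟩ := Countable.exists_injective_nat (posSubgraph G σ).ConnectedComponent
    exact ⟨_, (isClustering_coloring_comp_connectedComponentMk hG
      (compGraph G σ).selfColoring).comp_injective hg⟩
  refine ⟨clusterable_iff, fun hcl => ?_⟩
  have hG := clusterable_iff.mp hcl
  have := Fintype.ofFinite (posSubgraph G σ).ConnectedComponent
  rw [(compGraph G σ).colorable_of_fintype.chromaticNumber_eq_sInf, clusterNum]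
  simp only [colorable_compGraph_iff hG, IsClustering]
end

section
/- If a finite signed graph (G,sigma) has a cut delta(X) containing strictly more negative edges than positive edges, then Q(G,sigma) < |E^-(sigma)|. -/
open SimpleGraph Finset


/-- If some cut has strictly more negative than positive edges, then the inclusterability
index is less than the number of negative edges. -/
theorem inclusterIndex_lt_of_bad_cut {V : Type*} [Fintype V] (G : SimpleGraph V)
    (σ : Sym2 V → ℤˣ) (X : Set V)
    (h : {e ∈ cutEdges G X | σ e = 1}.ncard < {e ∈ cutEdges G X | σ e = -1}.ncard) :
    inclusterIndex G σ < (negEdges G σ).ncard := by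
  classical
  set Cut := cutEdges G X with hCut
  set T : Set (Sym2 V) := (negEdges G σ \ Cut) ∪ {e ∈ Cut | σ e = 1} with hT
  have hfinT : T.Finite := Set.toFinite T
  set S := hfinT.toFinset with hS
  have hScoe : (↑S : Set (Sym2 V)) = T := hfinT.coe_toFinset
  have hSsub : (↑S : Set (Sym2 V)) ⊆ G.edgeSet := by
    rw [hScoe]
    rintro e (⟨⟨he, _⟩, _⟩ | ⟨⟨he, _⟩, _⟩) <;> exact he
  have hclus : Clusterable (G.deleteEdges ↑S) σ := by
    refine ⟨fun v => if v ∈ X then 0 else 1, ?_⟩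
    intro u v huv
    rw [SimpleGraph.deleteEdges_adj] at huv
    obtain ⟨hadj, hnot⟩ := huv
    rw [Finset.mem_coe, Set.Finite.mem_toFinset] at hnot
    by_cases hc : s(u, v) ∈ Cut
    · have hσ : σ s(u, v) ≠ 1 := fun hσ1 => hnot (Or.inr ⟨hc, hσ1⟩)
      constructor
      · intro h1; exact absurd h1 hσ
      · intro hcv
        exfalso
        obtain ⟨_, a, b, hab, haX, hbX⟩ := hc
        rw [Sym2.eq_iff] at hab
        rcases hab with ⟨rfl, rfl⟩ | ⟨rfl, rfl⟩
        · simp only [if_pos haX, if_neg hbX] at hcv; exact absurd hcv (by norm_num)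
        · simp only [if_pos haX, if_neg hbX] at hcv; exact absurd hcv (by norm_num)
    · have hσ : σ s(u, v) ≠ -1 := by
        intro hσm
        exact hnot (Or.inl ⟨⟨G.mem_edgeSet.mpr hadj, hσm⟩, hc⟩)
      have hσ1 : σ s(u, v) = 1 := by
        rcases Int.units_eq_one_or (σ s(u, v)) with h1 | h1
        · exact h1
        · exact absurd h1 hσ
      have huvX : (u ∈ X ↔ v ∈ X) := by
        constructor
        · intro hu
          by_contra hv
          exact hc ⟨G.mem_edgeSet.mpr hadj, u, v, rfl, hu, hv⟩
        · intro hv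
          by_contra hu
          exact hc ⟨G.mem_edgeSet.mpr hadj, v, u, Sym2.eq_swap, hv, hu⟩
      simp only [hσ1, true_iff]
      by_cases hu : u ∈ X
      · rw [if_pos hu, if_pos (huvX.mp hu)]
      · rw [if_neg hu, if_neg (fun hv => hu (huvX.mpr hv))]
  have hmem : S.card ∈ {n | ∃ S : Finset (Sym2 V), ↑S ⊆ G.edgeSet ∧ S.card = n ∧
      Clusterable (G.deleteEdges ↑S) σ} := ⟨S, hSsub, rfl, hclus⟩
  have hle : inclusterIndex G σ ≤ S.card := Nat.sInf_le hmem
  -- now the cardinality computation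
  have hTcard : T.ncard = (negEdges G σ \ Cut).ncard + {e ∈ Cut | σ e = 1}.ncard := by
    rw [hT]
    apply Set.ncard_union_eq
    · rw [Set.disjoint_left]
      rintro e ⟨_, henc⟩ ⟨hec, _⟩
      exact henc hec
    · exact Set.toFinite _
    · exact Set.toFinite _
  have hScard : S.card = T.ncard := by
    rw [← Set.ncard_coe_finset, hScoe]
  have hnegcut : {e ∈ Cut | σ e = -1} = negEdges G σ ∩ Cut := by
    ext e
    constructor
    · rintro ⟨hec, hσ⟩
      exact ⟨⟨hec.1, hσ⟩, hec⟩
    · rintro ⟨⟨_, hσ⟩, hec⟩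
      exact ⟨hec, hσ⟩
  have hneg : (negEdges G σ).ncard = (negEdges G σ \ Cut).ncard + (negEdges G σ ∩ Cut).ncard := by
    rw [← Set.ncard_union_eq (Set.disjoint_left.mpr fun e he h2 => he.2 h2.2) (Set.toFinite _) (Set.toFinite _),
      Set.diff_union_inter]
  calc inclusterIndex G σ ≤ S.card := hle
    _ = (negEdges G σ \ Cut).ncard + {e ∈ Cut | σ e = 1}.ncard := by rw [hScard, hTcard]
    _ < (negEdges G σ \ Cut).ncard + (negEdges G σ ∩ Cut).ncard := by
        rw [← hnegcut]; exact Nat.add_lt_add_left h _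
    _ = (negEdges G σ).ncard := hneg.symm
end

section
/- Let l >= 3 and k >= 1, and let sigma be a signature of the cycle graph C_l on l vertices. If sigma is balanced (the product of all edge signs is +1), then the number of proper k-colorations of (C_l,sigma) is (2k)^l + (-1)^l * (2k) and the number of zero-free proper k-colorations is (2k-1)^l + (-1)^l * (2k-1). If sigma is unbalanced (the product of all edge signs is -1), these numbers are (2k)^l and (2k-1)^l - (-1)^l respectively. In particular, for every k a balanced and an unbalanced signature of C_l have different numbers of proper k-colorations and different numbers of zero-free proper k-colorations. -/
open SimpleGraph Finset


/-- A proper `k`-coloration of a signed graph: colors are integers of absolute value at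
most `k`, and `κ(w) ≠ σ(vw) κ(v)` for every edge `vw`. -/
def IsProperCol {V : Type*} (G : SimpleGraph V) (σ : Sym2 V → ℤˣ) (k : ℕ) (κ : V → ℤ) : Prop :=
  (∀ v : V, |κ v| ≤ (k : ℤ)) ∧ ∀ u v : V, G.Adj u v → κ v ≠ (σ s(u, v) : ℤ) * κ u

/-- The chromatic number of a signed graph: the least `k` admitting a proper
`k`-coloration. -/
noncomputable def chromNum {V : Type*} (G : SimpleGraph V) (σ : Sym2 V → ℤˣ) : ℕ :=
  sInf {k | ∃ κ : V → ℤ, IsProperCol G σ k κ}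

/-- The zero-free chromatic number of a signed graph: the least `k` admitting a zero-free
proper `k`-coloration. -/
noncomputable def zfChromNum {V : Type*} (G : SimpleGraph V) (σ : Sym2 V → ℤˣ) : ℕ :=
  sInf {k | ∃ κ : V → ℤ, IsProperCol G σ k κ ∧ ∀ v : V, κ v ≠ 0}

/-- The number of proper `k`-colorations of a signed graph. -/
noncomputable def properColCount {V : Type*} (G : SimpleGraph V) (σ : Sym2 V → ℤˣ)
    (k : ℕ) : ℕ :=
  Set.ncard {κ : V → ℤ | IsProperCol G σ k κ}

/-- The number of zero-free proper `k`-colorations of a signed graph. -/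
noncomputable def zfColCount {V : Type*} (G : SimpleGraph V) (σ : Sym2 V → ℤˣ)
    (k : ℕ) : ℕ :=
  Set.ncard {κ : V → ℤ | IsProperCol G σ k κ ∧ ∀ v : V, κ v ≠ 0}

/-! A proper colouring of the signed cycle with colours from a set `C` closed under negation is
a cyclic sequence `x` in `C` with `x (i + 1) ≠ f_i (x i)`, where `f_i` is multiplication by the
sign of the `i`-th edge. For arbitrary permutations `f_i` of an `n`-element set, the number
`W_m(a, b)` of such sequences of length `m` from `a` to `b` satisfies
`n W_m(a, b) = (n - 1)^m - (-1)^m + (-1)^m n [F_m a = b]` with `F_m = f_{m-1} ∘ ⋯ ∘ f_0`,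
by induction on `m`. Summing over closed sequences, there are
`(n - 1)^l - (-1)^l + (-1)^l #Fix(F_l)` colourings of `C_l`. Here `F_l` is multiplication by the
product of all signs: it fixes every colour if `σ` is balanced, and only `0` otherwise. -/

section AvoidingWalks

variable {α : Type*} (f : ℕ → Equiv.Perm α)

def walkGain : ℕ → Equiv.Perm α
  | 0 => 1
  | m + 1 => f m * walkGain m

variable [Fintype α] [DecidableEq α]

def avoidingWalks (m : ℕ) (a b : α) : Finset (Fin (m + 1) → α) :=
  {x | x 0 = a ∧ x (Fin.last m) = b ∧ ∀ i : Fin m, x i.succ ≠ f i (x i.castSucc)}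

def avoidingCycles (m : ℕ) : Finset (Fin (m + 1) → α) :=
  {x | ∀ i : Fin (m + 1), x (i + 1) ≠ f i (x i)}

theorem avoidingWalks_zero (a b : α) :
    avoidingWalks f 0 a b = if a = b then {fun _ => a} else ∅ := by
  ext x
  split_ifs with hab
  · subst hab
    simp [avoidingWalks, funext_iff, Fin.forall_fin_one]
  · simp only [avoidingWalks, Fin.last_zero, mem_filter, mem_univ, true_and, notMem_empty,
      iff_false]
    rintro ⟨rfl, rfl, -⟩
    exact hab rfl

theorem mem_avoidingWalks_succ {m : ℕ} {a b : α} {x : Fin (m + 2) → α} :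
    x ∈ avoidingWalks f (m + 1) a b ↔
      Fin.init x ∈ avoidingWalks f m a (x (Fin.last m).castSucc) ∧
        x (Fin.last (m + 1)) = b ∧ b ≠ f m (x (Fin.last m).castSucc) := by
  simp only [avoidingWalks, mem_filter, mem_univ, true_and, Fin.forall_fin_succ' (n := m),
    Fin.init, Fin.succ_last, Fin.val_last, Fin.val_castSucc, Fin.succ_castSucc, Fin.castSucc_zero]
  constructor
  · rintro ⟨h0, rfl, hsteps, hlast⟩
    exact ⟨⟨h0, hsteps⟩, rfl, hlast⟩
  · rintro ⟨⟨h0, hsteps⟩, rfl, hlast⟩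
    exact ⟨h0, rfl, hsteps, hlast⟩

theorem card_avoidingWalks_succ (m : ℕ) (a b : α) :
    #(avoidingWalks f (m + 1) a b) = ∑ c with b ≠ f m c, #(avoidingWalks f m a c) := by
  rw [card_eq_sum_card_fiberwise (f := fun x => x (Fin.last m).castSucc)]
  · refine sum_congr rfl fun c hc => card_nbij' Fin.init (Fin.snoc · b) ?_ ?_ ?_ ?_
    · intro x hx
      simp only [coe_filter, Set.mem_ofPred, mem_avoidingWalks_succ] at hx
      exact hx.2 ▸ hx.1.1
    · intro y hy
      have hyc : y (Fin.last m) = c := (mem_filter.1 hy).2.2.1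
      simp only [coe_filter, Set.mem_ofPred, mem_avoidingWalks_succ, Fin.init_snoc, Fin.snoc_last,
        Fin.snoc_castSucc, hyc, true_and, and_true]
      exact ⟨hy, (mem_filter.1 hc).2⟩
    · intro x hx
      simp only [coe_filter, Set.mem_ofPred, mem_avoidingWalks_succ] at hx
      rw [← hx.1.2.1]
      exact Fin.snoc_init_self x
    · intro y _
      exact Fin.init_snoc _ _
  · intro x hx
    simp_all [mem_avoidingWalks_succ]

theorem card_mul_card_avoidingWalks (m : ℕ) (a b : α) :
    (Fintype.card α : ℤ) * #(avoidingWalks f m a b) =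
      (Fintype.card α - 1) ^ m - (-1) ^ m +
        if walkGain f m a = b then (-1 : ℤ) ^ m * Fintype.card α else 0 := by
  induction m generalizing b with
  | zero =>
    rw [avoidingWalks_zero, walkGain, Equiv.Perm.one_apply]
    split_ifs <;> simp
  | succ m ih =>
    have hsteps : ({c | b ≠ f m c} : Finset α) = univ.erase ((f m).symm b) := by
      ext c
      simp [Equiv.eq_symm_apply, eq_comm]
    have hgain : walkGain f m a = (f m).symm b ↔ walkGain f (m + 1) a = b :=
      Equiv.eq_symm_apply _
    rw [card_avoidingWalks_succ, hsteps, Nat.cast_sum, mul_sum, sum_congr rfl fun c _ => ih c,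
      sum_erase_eq_sub (mem_univ _), sum_add_distrib, sum_const, card_univ, sum_ite_eq,
      if_pos (mem_univ _), nsmul_eq_mul]
    simp only [hgain]
    split_ifs <;> ring

theorem mem_avoidingCycles {m : ℕ} {x : Fin (m + 1) → α} :
    x ∈ avoidingCycles f m ↔
      x ∈ avoidingWalks f m (x 0) (x (Fin.last m)) ∧ x 0 ≠ f m (x (Fin.last m)) := by
  simp [avoidingCycles, avoidingWalks, Fin.forall_fin_succ', Fin.coeSucc_eq_succ]

theorem card_avoidingCycles_eq_sum (m : ℕ) :
    #(avoidingCycles f m) = ∑ a, #(avoidingWalks f (m + 1) a a) := by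
  simp_rw [card_avoidingWalks_succ]
  rw [card_eq_sum_card_fiberwise (f := fun x => (x 0, x (Fin.last m)))
      (t := {p : α × α | p.1 ≠ f m p.2}),
    sum_finset_product _ univ (fun a => {b | a ≠ f m b}) (by simp)]
  · refine sum_congr rfl fun a _ => sum_congr rfl fun b hb => congrArg card ?_
    ext x
    simp only [mem_filter, mem_avoidingCycles, Prod.ext_iff]
    constructor
    · rintro ⟨⟨hx, -⟩, rfl, rfl⟩
      exact hx
    · intro hx
      obtain ⟨rfl, rfl, -⟩ := (mem_filter.1 hx).2
      exact ⟨⟨hx, (mem_filter.1 hb).2⟩, rfl, rfl⟩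
  · intro x hx
    simp_all [mem_avoidingCycles]

theorem card_avoidingCycles (m : ℕ) :
    (#(avoidingCycles f m) : ℤ) = (Fintype.card α - 1) ^ (m + 1) - (-1) ^ (m + 1) +
      (-1) ^ (m + 1) * #{a | walkGain f (m + 1) a = a} := by
  rcases isEmpty_or_nonempty α with hα | hα
  · simp [avoidingCycles]
  · have hcard : (Fintype.card α : ℤ) ≠ 0 := Nat.cast_ne_zero.2 Fintype.card_ne_zero
    refine mul_left_cancel₀ hcard ?_
    rw [card_avoidingCycles_eq_sum, Nat.cast_sum, mul_sum,
      sum_congr rfl fun a _ => card_mul_card_avoidingWalks f (m + 1) a a, sum_add_distrib,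
      sum_const, card_univ, sum_ite, sum_const, sum_const_zero, add_zero, nsmul_eq_mul,
      nsmul_eq_mul]
    ring

end AvoidingWalks

section SignedCycles

theorem Int.eq_units_mul_comm (u : ℤˣ) (a b : ℤ) : a = u * b ↔ b = u * a := by
  constructor <;> rintro rfl <;> rw [← mul_assoc, ← Units.val_mul, Int.units_mul_self,
    Units.val_one, one_mul]

def unitPerm (C : Finset ℤ) (hC : ∀ x ∈ C, -x ∈ C) (u : ℤˣ) : Equiv.Perm C :=
  (MulAction.toPerm u).subtypePerm fun x => by
    rcases Int.units_eq_one_or u with rfl | rfl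
    · simp
    · simpa using ⟨fun h => by simpa using hC _ h, hC x⟩

theorem unitPerm_apply (C : Finset ℤ) (hC : ∀ x ∈ C, -x ∈ C) (u : ℤˣ) (x : C) :
    (unitPerm C hC u x : ℤ) = u * x :=
  rfl

theorem walkGain_unitPerm (C : Finset ℤ) (hC : ∀ x ∈ C, -x ∈ C) (e : ℕ → ℤˣ) (m : ℕ) (x : C) :
    (walkGain (fun i => unitPerm C hC (e i)) m x : ℤ) = (∏ i ∈ range m, e i : ℤˣ) * x := by
  induction m with
  | zero => simp [walkGain]
  | succ m ih =>
    rw [walkGain, Equiv.Perm.mul_apply, unitPerm_apply, ih, prod_range_succ, Units.val_mul]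
    ring

theorem ncard_setOf_forall_mem_and {ι β : Type*} [Fintype ι] [DecidableEq ι] (C : Finset β)
    (P : (ι → β) → Prop) [DecidablePred P] :
    {κ : ι → β | (∀ v, κ v ∈ C) ∧ P κ}.ncard = #{x : ι → C | P fun v => x v} := by
  rw [← Set.ncard_coe_finset]
  refine Set.ncard_congr (fun κ hκ v => ⟨κ v, hκ.1 v⟩) (fun κ hκ => by simpa using hκ.2)
    (fun κ κ' _ _ h => funext fun v => congrArg Subtype.val (congrFun h v)) fun x hx => ?_
  exact ⟨fun v => x v, ⟨fun v => (x v).2, by simpa using hx⟩, rfl⟩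

open Fin.NatCast in
theorem ncard_signed_cycle_colorings (C : Finset ℤ) (hC : ∀ x ∈ C, -x ∈ C) {l : ℕ} [NeZero l]
    (e : Fin l → ℤˣ) :
    ({κ : Fin l → ℤ | (∀ v, κ v ∈ C) ∧ ∀ i, κ (i + 1) ≠ e i * κ i}.ncard : ℤ) =
      (#C - 1) ^ l - (-1) ^ l + (-1) ^ l * #{x ∈ C | ((∏ i, e i : ℤˣ) : ℤ) * x = x} := by
  obtain ⟨m, rfl⟩ := Nat.exists_eq_succ_of_ne_zero (NeZero.ne l)
  set f : ℕ → Equiv.Perm C := fun i => unitPerm C hC (e i)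
  have hcycles : ({x : Fin (m + 1) → C | ∀ i, (x (i + 1) : ℤ) ≠ e i * x i} : Finset _) =
      avoidingCycles f m := by
    ext x
    simp [avoidingCycles, f, Subtype.ext_iff, unitPerm_apply]
  have hgain (a : C) : (walkGain f (m + 1) a : ℤ) = ((∏ i, e i : ℤˣ) : ℤ) * a := by
    rw [walkGain_unitPerm, ← Fin.prod_univ_eq_prod_range]
    simp
  have hfixed : #{a | walkGain f (m + 1) a = a} = #{x ∈ C | ((∏ i, e i : ℤˣ) : ℤ) * x = x} := by
    refine card_bij (fun a _ => (a : ℤ)) (fun a ha => ?_) (fun a _ b _ => Subtype.ext)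
      fun x hx => ?_
    · simpa [Subtype.ext_iff, hgain] using ha
    · exact ⟨⟨x, (mem_filter.1 hx).1⟩, by simpa [Subtype.ext_iff, hgain] using (mem_filter.1 hx).2,
        rfl⟩
  rw [ncard_setOf_forall_mem_and, hcycles, card_avoidingCycles, Fintype.card_coe, hfixed]

theorem cycleGraph_adj_iff {n : ℕ} {u v : Fin (n + 2)} :
    (cycleGraph (n + 2)).Adj u v ↔ u = v + 1 ∨ v = u + 1 := by
  rw [cycleGraph_adj, sub_eq_iff_eq_add, sub_eq_iff_eq_add, add_comm 1 v, add_comm 1 u]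

theorem isProperCol_cycleGraph_iff {n k : ℕ} {σ : Sym2 (Fin (n + 2)) → ℤˣ}
    {κ : Fin (n + 2) → ℤ} :
    IsProperCol (cycleGraph (n + 2)) σ k κ ↔
      (∀ v, |κ v| ≤ k) ∧ ∀ i, κ (i + 1) ≠ σ s(i, i + 1) * κ i := by
  refine and_congr_right fun _ => ⟨fun h i => h i (i + 1) (cycleGraph_adj_iff.2 (.inr rfl)),
    fun h u v huv => ?_⟩
  rcases cycleGraph_adj_iff.1 huv with rfl | rfl
  · rw [Sym2.eq_swap, Ne, Int.eq_units_mul_comm]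
    exact h v
  · exact h u

theorem prod_edgeFinset_cycleGraph {M : Type*} [CommMonoid M] {n : ℕ}
    (g : Sym2 (Fin (n + 3)) → M) :
    ∏ e ∈ (cycleGraph (n + 3)).edgeFinset, g e = ∏ i, g s(i, i + 1) := by
  symm
  refine prod_bij (fun i _ => s(i, i + 1)) (fun i _ => ?_) (fun i _ j _ hij => ?_)
    (fun e he => ?_) fun _ _ => rfl
  · simp [cycleGraph_adj_iff]
  · rcases Sym2.eq_iff.1 hij with ⟨h, -⟩ | ⟨rfl, h⟩
    · exact h
    · rw [add_assoc, add_eq_left] at h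
      simp [Fin.ext_iff, Fin.val_add, Nat.mod_eq_of_lt (show 2 < n + 3 by omega)] at h
  · induction e using Sym2.ind with
    | _ u v =>
    rcases cycleGraph_adj_iff.1 (by simpa using he) with rfl | rfl
    · exact ⟨v, mem_univ _, Sym2.eq_swap⟩
    · exact ⟨u, mem_univ _, rfl⟩

theorem card_Icc_neg_self (k : ℕ) : #(Icc (-k : ℤ) k) = 2 * k + 1 := by
  rw [Int.card_Icc]
  omega

theorem card_Icc_neg_self_erase_zero (k : ℕ) : #((Icc (-k : ℤ) k).erase 0) = 2 * k := by
  rw [card_erase_of_mem (by simp), card_Icc_neg_self, Nat.add_sub_cancel]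

theorem properColCount_cycleGraph (n k : ℕ) (σ : Sym2 (Fin (n + 3)) → ℤˣ) :
    (properColCount (cycleGraph (n + 3)) σ k : ℤ) = (2 * k) ^ (n + 3) - (-1) ^ (n + 3) +
      (-1) ^ (n + 3) *
        #{x ∈ Icc (-k : ℤ) k | ((∏ e ∈ (cycleGraph (n + 3)).edgeFinset, σ e : ℤˣ) : ℤ) * x = x} := by
  have hset : {κ | IsProperCol (cycleGraph (n + 3)) σ k κ} =
      {κ | (∀ v, κ v ∈ Icc (-k : ℤ) k) ∧ ∀ i, κ (i + 1) ≠ (σ s(i, i + 1) : ℤ) * κ i} := by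
    ext κ
    simp [isProperCol_cycleGraph_iff, abs_le]
  unfold properColCount
  rw [hset, ncard_signed_cycle_colorings _ (fun x hx => by simp at hx ⊢; omega),
    prod_edgeFinset_cycleGraph, card_Icc_neg_self]
  push_cast
  ring

theorem zfColCount_cycleGraph (n k : ℕ) (σ : Sym2 (Fin (n + 3)) → ℤˣ) :
    (zfColCount (cycleGraph (n + 3)) σ k : ℤ) = (2 * k - 1) ^ (n + 3) - (-1) ^ (n + 3) +
      (-1) ^ (n + 3) * #{x ∈ (Icc (-k : ℤ) k).erase 0 |
        ((∏ e ∈ (cycleGraph (n + 3)).edgeFinset, σ e : ℤˣ) : ℤ) * x = x} := by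
  have hset : {κ | IsProperCol (cycleGraph (n + 3)) σ k κ ∧ ∀ v, κ v ≠ 0} =
      {κ | (∀ v, κ v ∈ (Icc (-k : ℤ) k).erase 0) ∧
        ∀ i, κ (i + 1) ≠ (σ s(i, i + 1) : ℤ) * κ i} := by
    ext κ
    simp only [Set.mem_ofPred_eq, isProperCol_cycleGraph_iff, mem_erase, mem_Icc, abs_le]
    grind
  unfold zfColCount
  rw [hset, ncard_signed_cycle_colorings _ (fun x hx => by simp at hx ⊢; omega),
    prod_edgeFinset_cycleGraph, card_Icc_neg_self_erase_zero]
  push_cast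
  ring

theorem colCounts_cycleGraph_of_prod_eq_one {n k : ℕ} {σ : Sym2 (Fin (n + 3)) → ℤˣ}
    (hσ : ∏ e ∈ (cycleGraph (n + 3)).edgeFinset, σ e = 1) :
    (properColCount (cycleGraph (n + 3)) σ k : ℤ) = (2 * k) ^ (n + 3) + (-1) ^ (n + 3) * (2 * k) ∧
      (zfColCount (cycleGraph (n + 3)) σ k : ℤ) =
        (2 * k - 1) ^ (n + 3) + (-1) ^ (n + 3) * (2 * k - 1) := by
  rw [properColCount_cycleGraph, zfColCount_cycleGraph, hσ]
  simp only [Units.val_one, one_mul, filter_true, card_Icc_neg_self, card_Icc_neg_self_erase_zero]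
  push_cast
  constructor <;> ring

theorem colCounts_cycleGraph_of_prod_eq_neg_one {n k : ℕ} {σ : Sym2 (Fin (n + 3)) → ℤˣ}
    (hσ : ∏ e ∈ (cycleGraph (n + 3)).edgeFinset, σ e = -1) :
    (properColCount (cycleGraph (n + 3)) σ k : ℤ) = (2 * k) ^ (n + 3) ∧
      (zfColCount (cycleGraph (n + 3)) σ k : ℤ) = (2 * k - 1) ^ (n + 3) - (-1) ^ (n + 3) := by
  rw [properColCount_cycleGraph, zfColCount_cycleGraph, hσ]
  simp [neg_eq_self, filter_eq']

end SignedCycles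

open scoped Classical in
/-- The numbers of proper and zero-free proper `k`-colorations of a balanced and of an
unbalanced signature of the cycle `C_l`; in particular they always differ. -/
theorem cycle_coloration_counts (l k : ℕ) (hl : 3 ≤ l) (hk : 1 ≤ k)
    (σ : Sym2 (Fin l) → ℤˣ) :
    ((∏ e ∈ (cycleGraph l).edgeFinset, σ e) = 1 →
      (properColCount (cycleGraph l) σ k : ℤ) = (2 * k) ^ l + (-1) ^ l * (2 * k) ∧
      (zfColCount (cycleGraph l) σ k : ℤ) =
        (2 * k - 1) ^ l + (-1) ^ l * (2 * k - 1)) ∧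
    ((∏ e ∈ (cycleGraph l).edgeFinset, σ e) = -1 →
      (properColCount (cycleGraph l) σ k : ℤ) = (2 * k) ^ l ∧
      (zfColCount (cycleGraph l) σ k : ℤ) = (2 * k - 1) ^ l - (-1) ^ l) ∧
    (∀ σ' : Sym2 (Fin l) → ℤˣ,
      (∏ e ∈ (cycleGraph l).edgeFinset, σ e) = 1 →
      (∏ e ∈ (cycleGraph l).edgeFinset, σ' e) = -1 →
      properColCount (cycleGraph l) σ k ≠ properColCount (cycleGraph l) σ' k ∧
      zfColCount (cycleGraph l) σ k ≠ zfColCount (cycleGraph l) σ' k) := by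
  obtain ⟨n, rfl⟩ : ∃ n, l = n + 3 := ⟨l - 3, by omega⟩
  refine ⟨colCounts_cycleGraph_of_prod_eq_one, colCounts_cycleGraph_of_prod_eq_neg_one,
    fun σ' hσ hσ' => ?_⟩
  obtain ⟨hp, hz⟩ := colCounts_cycleGraph_of_prod_eq_one (k := k) hσ
  obtain ⟨hp', hz'⟩ := colCounts_cycleGraph_of_prod_eq_neg_one (k := k) hσ'
  have hk' : (1 : ℤ) ≤ k := by exact_mod_cast hk
  refine ⟨fun h => ?_, fun h => ?_⟩
  · have h' := congrArg ((↑) : ℕ → ℤ) h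
    rw [hp, hp'] at h'
    rcases neg_one_pow_eq_or ℤ (n + 3) with hs | hs <;> rw [hs] at h' <;> linarith
  · have h' := congrArg ((↑) : ℕ → ℤ) h
    rw [hz, hz'] at h'
    rcases neg_one_pow_eq_or ℤ (n + 3) with hs | hs <;> rw [hs] at h' <;> linarith
end
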